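/- arXiv:2404.03460 — 5 statements merged into one kernel-verified Lean document; each statement's English description precedes it below -/
import Mathlib

section
/- Let M and N be topological spaces and let Φ : M × ℝ → M and Ψ : N × ℝ → N be continuous maps such that Φ(p,0) = p for all p ∈ M, Φ(p,s) ≠ p for all p ∈ M and all s ∈ (0,1], Ψ(q,0) = q for all q ∈ N, and Ψ(q,s) ≠ q for all q ∈ N and all s ∈ (0,1]. For a free loop σ ∈ ΛM define f(σ) ∈ ΛM by f(σ)(t) = Φ(σ(0), 3t) for 0 ≤ t ≤ 1/3, f(σ)(t) = Φ(σ(0), 2 − 3t) for 1/3 ≤ t ≤ 2/3, and f(σ)(t) = σ(3t − 2) for 2/3 ≤ t ≤ 1; for a free loop η ∈ ΛN define g(η) ∈ ΛN by g(η)(t) = η(3t) for 0 ≤ t ≤ 1/3, g(η)(t) = Ψ(η(1), 3t − 1) for 1/3 ≤ t ≤ 2/3, and g(η)(t) = Ψ(η(1), 3 − 3t) for 2/3 ≤ t ≤ 1. Then for every σ ∈ ΛM and η ∈ ΛN, the free loop γ(t) = (f(σ)(t), g(η)(t)) in M × N satisfies γ(t) ≠ γ(0) for every t ∈ (0,1).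 -/
/-- The free loop space of a topological space `X`: continuous maps `γ : [0,1] → X`
with `γ 0 = γ 1`, topologized as a subspace of `C([0,1], X)` with the
compact-open topology. -/
abbrev FreeLoop (X : Type*) [TopologicalSpace X] : Type _ :=
  {γ : C(unitInterval, X) // γ 0 = γ 1}

/-- Given flows `Φ` on `M` and `Ψ` on `N` which move every point for all
times `s ∈ (0,1]`, the loop `γ = (f σ, g η)` in `M × N` obtained from the piecewise
formulas of the paper has no nontrivial basepoint intersection: `γ t ≠ γ 0` for
all `t ∈ (0,1)`. -/
theorem stmt0 {M N : Type*} [TopologicalSpace M] [TopologicalSpace N]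
    (Φ : C(M × ℝ, M)) (Ψ : C(N × ℝ, N))
    (hΦ0 : ∀ p : M, Φ (p, 0) = p)
    (hΦ : ∀ (p : M) (s : ℝ), 0 < s → s ≤ 1 → Φ (p, s) ≠ p)
    (hΨ0 : ∀ q : N, Ψ (q, 0) = q)
    (hΨ : ∀ (q : N) (s : ℝ), 0 < s → s ≤ 1 → Ψ (q, s) ≠ q)
    (σ : C(unitInterval, M)) (hσ : σ 0 = σ 1)
    (η : C(unitInterval, N)) (hη : η 0 = η 1)
    (fσ : unitInterval → M) (gη : unitInterval → N)
    (hf1 : ∀ t : unitInterval, (t : ℝ) ≤ 1/3 → fσ t = Φ (σ 0, 3 * (t : ℝ)))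
    (hf2 : ∀ t : unitInterval, 1/3 ≤ (t : ℝ) → (t : ℝ) ≤ 2/3 →
      fσ t = Φ (σ 0, 2 - 3 * (t : ℝ)))
    (hf3 : ∀ t : unitInterval, 2/3 ≤ (t : ℝ) →
      ∀ h : (3 * (t : ℝ) - 2) ∈ unitInterval, fσ t = σ ⟨3 * (t : ℝ) - 2, h⟩)
    (hg1 : ∀ t : unitInterval, (t : ℝ) ≤ 1/3 →
      ∀ h : (3 * (t : ℝ)) ∈ unitInterval, gη t = η ⟨3 * (t : ℝ), h⟩)
    (hg2 : ∀ t : unitInterval, 1/3 ≤ (t : ℝ) → (t : ℝ) ≤ 2/3 →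
      gη t = Ψ (η 1, 3 * (t : ℝ) - 1))
    (hg3 : ∀ t : unitInterval, 2/3 ≤ (t : ℝ) → gη t = Ψ (η 1, 3 - 3 * (t : ℝ))) :
    ∀ t : unitInterval, 0 < (t : ℝ) → (t : ℝ) < 1 →
      (fσ t, gη t) ≠ (fσ 0, gη 0) := by
  intro t ht0 ht1
  have h0 : ((0 : unitInterval) : ℝ) = 0 := rfl
  have hf0 : fσ 0 = σ 0 := by
    rw [hf1 0 (by norm_num [h0])]
    rw [show (3 * ((0 : unitInterval) : ℝ)) = 0 by norm_num [h0], hΦ0]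
  have hg0 : gη 0 = η 0 := by
    rw [hg1 0 (by norm_num [h0]) (by norm_num [h0])]
    congr 1
    ext
    norm_num [h0]
  intro heq
  have h1 := congrArg Prod.fst heq
  have h2 := congrArg Prod.snd heq
  simp only at h1 h2
  rcases lt_or_ge (t : ℝ) (1/3) with h | h
  · rw [hf1 t h.le, hf0] at h1
    exact hΦ (σ 0) (3 * t) (by linarith) (by linarith) h1
  · rcases lt_or_ge (t : ℝ) (2/3) with h' | h'
    · rw [hf2 t h h'.le, hf0] at h1
      exact hΦ (σ 0) (2 - 3 * t) (by linarith) (by linarith) h1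
    · rw [hg3 t h', hg0] at h2
      exact hΨ (η 1) (3 - 3 * t) (by linarith) (by linarith) (h2.trans hη)
end

section
/- Let M and N be topological spaces with basepoints p₀ ∈ M and q₀ ∈ N. Let ω : [0,1] → M be a continuous path with ω(0) = p₀ and ω(s) ≠ p₀ for all s ∈ (0,1], and let σ : [0,1] → N be a continuous path with σ(0) = q₀ and σ(s) ≠ q₀ for all s ∈ (0,1]. For a based loop γ ∈ Ω_{p₀}M define f(γ) ∈ Ω_{p₀}M by f(γ)(t) = ω(3t) for 0 ≤ t ≤ 1/3, f(γ)(t) = ω(2 − 3t) for 1/3 ≤ t ≤ 2/3, and f(γ)(t) = γ(3t − 2) for 2/3 ≤ t ≤ 1; for a based loop η ∈ Ω_{q₀}N define g(η) ∈ Ω_{q₀}N by g(η)(t) = η(3t) for 0 ≤ t ≤ 1/3, g(η)(t) = σ(3t − 1) for 1/3 ≤ t ≤ 2/3, and g(η)(t) = σ(3 − 3t) for 2/3 ≤ t ≤ 1. Then for every γ ∈ Ω_{p₀}M and η ∈ Ω_{q₀}N, the based loop t ↦ (f(γ)(t), g(η)(t)) in M × N at (p₀,q₀) takes the value (p₀,q₀)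 only at t = 0 and t = 1. -/
/-- Given paths `ω` in `M` and `σ` in `N` which start at the basepoints
`p₀`, `q₀` and never return to them, the based loop `t ↦ (f(γ)(t), g(η)(t))` in `M × N`
built from the piecewise formulas of the paper takes the value `(p₀, q₀)` only at
`t = 0` and `t = 1`. -/
theorem stmt2 {M N : Type*} [TopologicalSpace M] [TopologicalSpace N] (p₀ : M) (q₀ : N)
    (ω : C(unitInterval, M)) (hω0 : ω 0 = p₀)
    (hω : ∀ s : unitInterval, 0 < (s : ℝ) → ω s ≠ p₀)
    (σ : C(unitInterval, N)) (hσ0 : σ 0 = q₀)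
    (hσ : ∀ s : unitInterval, 0 < (s : ℝ) → σ s ≠ q₀)
    (γ : C(unitInterval, M)) (hγ0 : γ 0 = p₀) (hγ1 : γ 1 = p₀)
    (η : C(unitInterval, N)) (hη0 : η 0 = q₀) (hη1 : η 1 = q₀)
    (fγ : unitInterval → M) (gη : unitInterval → N)
    (hf1 : ∀ t : unitInterval, (t : ℝ) ≤ 1/3 →
      ∀ h : (3 * (t : ℝ)) ∈ unitInterval, fγ t = ω ⟨3 * (t : ℝ), h⟩)
    (hf2 : ∀ t : unitInterval, 1/3 ≤ (t : ℝ) → (t : ℝ) ≤ 2/3 →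
      ∀ h : (2 - 3 * (t : ℝ)) ∈ unitInterval, fγ t = ω ⟨2 - 3 * (t : ℝ), h⟩)
    (hf3 : ∀ t : unitInterval, 2/3 ≤ (t : ℝ) →
      ∀ h : (3 * (t : ℝ) - 2) ∈ unitInterval, fγ t = γ ⟨3 * (t : ℝ) - 2, h⟩)
    (hg1 : ∀ t : unitInterval, (t : ℝ) ≤ 1/3 →
      ∀ h : (3 * (t : ℝ)) ∈ unitInterval, gη t = η ⟨3 * (t : ℝ), h⟩)
    (hg2 : ∀ t : unitInterval, 1/3 ≤ (t : ℝ) → (t : ℝ) ≤ 2/3 →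
      ∀ h : (3 * (t : ℝ) - 1) ∈ unitInterval, gη t = σ ⟨3 * (t : ℝ) - 1, h⟩)
    (hg3 : ∀ t : unitInterval, 2/3 ≤ (t : ℝ) →
      ∀ h : (3 - 3 * (t : ℝ)) ∈ unitInterval, gη t = σ ⟨3 - 3 * (t : ℝ), h⟩) :
    (fγ 0, gη 0) = (p₀, q₀) ∧ (fγ 1, gη 1) = (p₀, q₀) ∧
      ∀ t : unitInterval, (fγ t, gη t) = (p₀, q₀) → t = 0 ∨ t = 1 := by

  have h0 : ((0:unitInterval):ℝ) = 0 := rfl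
  have h1 : ((1:unitInterval):ℝ) = 1 := rfl
  refine ⟨?_, ?_, ?_⟩
  · have hm : (3 * ((0:unitInterval):ℝ)) ∈ unitInterval := by rw [h0]; norm_num
    have hf := hf1 0 (by rw [h0]; norm_num) hm
    have hg := hg1 0 (by rw [h0]; norm_num) hm
    have : (⟨3 * ((0:unitInterval):ℝ), hm⟩ : unitInterval) = 0 := by
      ext; simp
    rw [this] at hf hg
    simp [hf, hg, hω0, hη0]
  · have hm : (3 * ((1:unitInterval):ℝ) - 2) ∈ unitInterval := by rw [h1]; norm_num
    have hm' : (3 - 3 * ((1:unitInterval):ℝ)) ∈ unitInterval := by rw [h1]; norm_num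
    have hf := hf3 1 (by rw [h1]; norm_num) hm
    have hg := hg3 1 (by rw [h1]; norm_num) hm'
    have e1 : (⟨3 * ((1:unitInterval):ℝ) - 2, hm⟩ : unitInterval) = 1 := by
      ext; simp; norm_num
    have e2 : (⟨3 - 3 * ((1:unitInterval):ℝ), hm'⟩ : unitInterval) = 0 := by
      ext; simp
    rw [e1] at hf; rw [e2] at hg
    simp [hf, hg, hγ1, hσ0]
  · intro t ht
    by_contra hcon
    push_neg at hcon
    obtain ⟨ht0, ht1⟩ := hcon
    have htpos : 0 < (t : ℝ) := lt_of_le_of_ne t.2.1 (by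
      intro h; exact ht0 (by ext; exact h.symm))
    have htlt : (t : ℝ) < 1 := lt_of_le_of_ne t.2.2 (by
      intro h; exact ht1 (by ext; exact h))
    have hpair := Prod.mk.injEq .. ▸ ht
    rw [Prod.mk.injEq] at ht
    obtain ⟨htf, htg⟩ := ht
    rcases le_or_gt (t:ℝ) (1/3) with hc1 | hc1
    · have hm : (3 * (t:ℝ)) ∈ unitInterval := ⟨by positivity, by linarith⟩
      have := hf1 t hc1 hm
      exact hω _ (by simpa using htpos) (this ▸ htf)
    · rcases le_or_gt (t:ℝ) (2/3) with hc2 | hc2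
      · have hm : (3 * (t:ℝ) - 1) ∈ unitInterval := ⟨by linarith, by linarith⟩
        have := hg2 t hc1.le hc2 hm
        exact hσ _ (show (0:ℝ) < 3 * (t:ℝ) - 1 by linarith) (this ▸ htg)
      · have hm : (3 - 3 * (t:ℝ)) ∈ unitInterval := ⟨by linarith, by linarith⟩
        have := hg3 t hc2.le hm
        exact hσ _ (show (0:ℝ) < 3 - 3 * (t:ℝ) by linarith) (this ▸ htg)
end

section
/- Let E be a topological space and let Φ : E × ℝ → E be a continuous flow, i.e. Φ(x,0) = x and Φ(Φ(x,u),v) = Φ(x,u+v) for all x ∈ E and u,v ∈ ℝ. Let A, B ⊆ E be subsets and p₀ ∈ A ∩ B a point such that Φ(p₀,u) ∉ A ∪ B for every u ∈ [−1,1] with u ≠ 0. Let η : [0,1] → E be continuous with η(t) ∈ A for all t and η(0) = η(1) = p₀, and let σ : [0,1] → E be continuous with σ(t) ∈ B for all t and σ(0) = σ(1) = p₀. Define γ : [0,1] → E by γ(t) = Φ(η(2t), 2t) for 0 ≤ t ≤ 1/2 and γ(t) = Φ(σ(2t−1), 2−2t) for 1/2 ≤ t ≤ 1. Then γ is a continuous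 loop with γ(0) = γ(1) = p₀, and γ(t) ≠ p₀ for every t ∈ (0,1). -/
/-- Let `Φ` be a continuous flow on `E`, `A, B ⊆ E` subsets and
`p₀ ∈ A ∩ B` a point with `Φ(p₀,u) ∉ A ∪ B` for all `u ∈ [-1,1] \ {0}`. Given a loop `η`
at `p₀` inside `A` and a loop `σ` at `p₀` inside `B`, the concatenated flowed loop
`γ(t) = Φ(η(2t), 2t)` for `t ≤ 1/2`, `γ(t) = Φ(σ(2t-1), 2-2t)` for `t ≥ 1/2`, is a
continuous loop at `p₀` with `γ(t) ≠ p₀` for all `t ∈ (0,1)`. -/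
theorem stmt7 {E : Type*} [TopologicalSpace E] (Φ : C(E × ℝ, E))
    (hΦ0 : ∀ x : E, Φ (x, 0) = x)
    (hΦflow : ∀ (x : E) (u v : ℝ), Φ (Φ (x, u), v) = Φ (x, u + v))
    (A B : Set E) (p₀ : E) (hp₀ : p₀ ∈ A ∩ B)
    (hΦ : ∀ u : ℝ, u ∈ Set.Icc (-1 : ℝ) 1 → u ≠ 0 → Φ (p₀, u) ∉ A ∪ B)
    (η : C(unitInterval, E)) (hηA : ∀ t, η t ∈ A) (hη0 : η 0 = p₀) (hη1 : η 1 = p₀)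
    (σ : C(unitInterval, E)) (hσB : ∀ t, σ t ∈ B) (hσ0 : σ 0 = p₀) (hσ1 : σ 1 = p₀) :
    ∃ γ : C(unitInterval, E),
      (∀ t : unitInterval, (t : ℝ) ≤ 1/2 →
        ∀ h : (2 * (t : ℝ)) ∈ unitInterval,
          γ t = Φ (η ⟨2 * (t : ℝ), h⟩, 2 * (t : ℝ))) ∧
      (∀ t : unitInterval, 1/2 ≤ (t : ℝ) →
        ∀ h : (2 * (t : ℝ) - 1) ∈ unitInterval,
          γ t = Φ (σ ⟨2 * (t : ℝ) - 1, h⟩, 2 - 2 * (t : ℝ))) ∧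
      γ 0 = p₀ ∧ γ 1 = p₀ ∧
      (∀ t : unitInterval, 0 < (t : ℝ) → (t : ℝ) < 1 → γ t ≠ p₀) := by
  classical
  set pr : ℝ → unitInterval := Set.projIcc 0 1 zero_le_one with hpr
  have hprc : Continuous pr := continuous_projIcc
  set f : ℝ → E := fun t => Φ (η (pr (2*t)), 2*t) with hfdef
  set g : ℝ → E := fun t => Φ (σ (pr (2*t-1)), 2-2*t) with hgdef
  have c1 : Continuous fun t : ℝ => 2*t := continuous_const.mul continuous_id
  have c2 : Continuous fun t : ℝ => 2*t-1 := c1.sub continuous_const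
  have c3 : Continuous fun t : ℝ => 2-2*t := continuous_const.sub c1
  have hfc : Continuous f :=
    Φ.continuous.comp ((η.continuous.comp (hprc.comp c1)).prodMk c1)
  have hgc : Continuous g :=
    Φ.continuous.comp ((σ.continuous.comp (hprc.comp c2)).prodMk c3)
  have hmid : f (1/2) = g (1/2) := by
    have h1 : pr (2 * (1/2 : ℝ)) = 1 := by norm_num [hpr, Set.projIcc]
    have h0 : pr (2 * (1/2 : ℝ) - 1) = 0 := by norm_num [hpr, Set.projIcc]
    simp only [hfdef, hgdef, h1, h0, hη1, hσ0]
    norm_num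
  have hFc : Continuous fun t : ℝ => if t ≤ 1/2 then f t else g t := by
    apply Continuous.if_le hfc hgc continuous_id continuous_const
    intro x hx
    subst hx
    exact hmid
  refine ⟨⟨fun t => if (t : ℝ) ≤ 1/2 then f t else g t,
    hFc.comp continuous_subtype_val⟩, ?_, ?_, ?_, ?_, ?_⟩
  · intro t ht h
    have : pr (2 * (t : ℝ)) = ⟨2 * (t : ℝ), h⟩ := Set.projIcc_of_mem _ h
    simp only [ContinuousMap.coe_mk, if_pos ht, hfdef, this]
  · intro t ht h
    by_cases hle : (t : ℝ) ≤ 1/2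
    · have hteq : (t : ℝ) = 1/2 := le_antisymm hle ht
      have h1 : pr (2 * (t : ℝ)) = 1 := by rw [hteq]; norm_num [hpr, Set.projIcc]
      have h2 : (⟨2 * (t : ℝ) - 1, h⟩ : unitInterval) = 0 := by
        apply Subtype.ext; simp [hteq]
      show (if (t:ℝ) ≤ 1/2 then f (t:ℝ) else g (t:ℝ)) = _
      rw [if_pos hle]
      show Φ (η (pr (2 * (t:ℝ))), 2*(t:ℝ)) = _
      rw [h1, hη1, h2, hσ0, hteq]
      norm_num
    · have : pr (2 * (t : ℝ) - 1) = ⟨2 * (t : ℝ) - 1, h⟩ := Set.projIcc_of_mem _ h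
      simp only [ContinuousMap.coe_mk, if_neg hle, hgdef, this]
  · have hp0 : pr 0 = 0 := by norm_num [hpr, Set.projIcc]
    show (if ((0:unitInterval):ℝ) ≤ 1/2 then f ((0:unitInterval):ℝ) else g ((0:unitInterval):ℝ)) = p₀
    rw [if_pos (by norm_num [show ((0:unitInterval):ℝ) = 0 from rfl])]
    show Φ (η (pr (2 * ((0:unitInterval):ℝ))), 2 * ((0:unitInterval):ℝ)) = p₀
    rw [show ((0:unitInterval):ℝ) = 0 from rfl, mul_zero, hp0, hη0, hΦ0]
  · have hp1 : pr 1 = 1 := by norm_num [hpr, Set.projIcc]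
    show (if ((1:unitInterval):ℝ) ≤ 1/2 then f ((1:unitInterval):ℝ) else g ((1:unitInterval):ℝ)) = p₀
    rw [if_neg (by norm_num [show ((1:unitInterval):ℝ) = 1 from rfl])]
    show Φ (σ (pr (2 * ((1:unitInterval):ℝ) - 1)), 2 - 2*((1:unitInterval):ℝ)) = p₀
    rw [show ((1:unitInterval):ℝ) = 1 from rfl]
    norm_num [hp1, hσ1, hΦ0]
  · intro t ht0 ht1 hcon
    by_cases hle : (t : ℝ) ≤ 1/2
    · have hmem : (2 * (t : ℝ)) ∈ Set.Icc (0:ℝ) 1 := by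
        constructor <;> nlinarith
      have hpj : pr (2 * (t : ℝ)) = ⟨2 * (t : ℝ), hmem⟩ := Set.projIcc_of_mem _ hmem
      have hval : Φ (η ⟨2 * (t : ℝ), hmem⟩, 2 * (t : ℝ)) = p₀ := by
        simpa only [ContinuousMap.coe_mk, if_pos hle, hfdef, hpj] using hcon
      have key : Φ (p₀, -(2 * (t : ℝ))) = η ⟨2 * (t : ℝ), hmem⟩ := by
        rw [← hval, hΦflow]
        simp [hΦ0]
      have : Φ (p₀, -(2 * (t : ℝ))) ∉ A ∪ B := by
        apply hΦ
        · constructor <;> nlinarith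
        · intro h; nlinarith [neg_eq_zero.mp h]
      exact this (by rw [key]; exact Or.inl (hηA _))
    · push_neg at hle
      have hmem : (2 * (t : ℝ) - 1) ∈ Set.Icc (0:ℝ) 1 := by
        constructor <;> nlinarith
      have hpj : pr (2 * (t : ℝ) - 1) = ⟨2 * (t : ℝ) - 1, hmem⟩ := Set.projIcc_of_mem _ hmem
      have hval : Φ (σ ⟨2 * (t : ℝ) - 1, hmem⟩, 2 - 2 * (t : ℝ)) = p₀ := by
        simpa only [ContinuousMap.coe_mk, if_neg (not_le.mpr hle), hgdef, hpj] using hcon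
      have key : Φ (p₀, -(2 - 2 * (t : ℝ))) = σ ⟨2 * (t : ℝ) - 1, hmem⟩ := by
        rw [← hval, hΦflow]
        simp [hΦ0]
      have : Φ (p₀, -(2 - 2 * (t : ℝ))) ∉ A ∪ B := by
        apply hΦ
        · constructor <;> nlinarith
        · intro h; nlinarith [neg_eq_zero.mp h]
      exact this (by rw [key]; exact Or.inr (hσB _))
end

section
/- Let M be a topological space, N ⊆ M a subset, p₀ ∈ N, and Φ : N × [0,1] → M a continuous map with Φ(p,0) = p for all p ∈ N and Φ(p,s) ≠ p₀ for all p ∈ N and s ∈ (0,1]. Let ρ : [0,1] → [0,1] be continuous with ρ(0) = ρ(1) = 0 and ρ(t) > 0 for all t ∈ (0,1). For a based loop γ ∈ Ω_{p₀}N define ψ(γ)(t) = Φ(γ(t), ρ(t)). Then ψ(γ) is a based loop in M at p₀ with ψ(γ)(t) ≠ p₀ for every t ∈ (0,1), and the resulting map ψ : Ω_{p₀}N → Ω_{p₀}M is continuous and homotopic, through basepoint-preserving loops, to the inclusion Ω_{p₀}N ↪ Ω_{p₀}M. -/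
/-- Let `N ⊆ M`, `p₀ ∈ N`, `Φ : N × [0,1] → M` continuous with
`Φ(p,0) = p` and `Φ(p,s) ≠ p₀` for `s > 0`, and `ρ : [0,1] → [0,1]` continuous with
`ρ(0) = ρ(1) = 0` and `ρ > 0` on `(0,1)`. Then `ψ(γ)(t) = Φ(γ(t), ρ(t))` defines a
continuous map `ψ : Ω_{p₀}N → Ω_{p₀}M` of based loop spaces whose loops avoid `p₀` on
`(0,1)`, and `ψ` is homotopic (through basepoint-preserving loops, i.e. as maps into
`Ω_{p₀}M = Path p₀ p₀`) to the inclusion `Ω_{p₀}N ↪ Ω_{p₀}M`. -/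
theorem stmt11 {M : Type*} [TopologicalSpace M] (N : Set M) (p₀ : M) (hp₀ : p₀ ∈ N)
    (Φ : C(↥N × unitInterval, M)) (hΦ0 : ∀ p : N, Φ (p, 0) = p)
    (hΦ : ∀ (p : N) (s : unitInterval), 0 < (s : ℝ) → Φ (p, s) ≠ p₀)
    (ρ : C(unitInterval, unitInterval)) (hρ0 : ρ 0 = 0) (hρ1 : ρ 1 = 0)
    (hρ : ∀ t : unitInterval, 0 < (t : ℝ) → (t : ℝ) < 1 → 0 < (ρ t : ℝ)) :
    ∃ (ψ : C(Path (⟨p₀, hp₀⟩ : N) ⟨p₀, hp₀⟩, Path p₀ p₀))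
      (incl : C(Path (⟨p₀, hp₀⟩ : N) ⟨p₀, hp₀⟩, Path p₀ p₀)),
      (∀ (γ : Path (⟨p₀, hp₀⟩ : N) ⟨p₀, hp₀⟩) (t : unitInterval),
        ψ γ t = Φ (γ t, ρ t)) ∧
      (∀ (γ : Path (⟨p₀, hp₀⟩ : N) ⟨p₀, hp₀⟩) (t : unitInterval),
        0 < (t : ℝ) → (t : ℝ) < 1 → ψ γ t ≠ p₀) ∧
      (∀ (γ : Path (⟨p₀, hp₀⟩ : N) ⟨p₀, hp₀⟩) (t : unitInterval),
        incl γ t = (γ t : M)) ∧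
      ψ.Homotopic incl := by
  classical
  set q₀ : N := (⟨p₀, hp₀⟩ : N)
  -- the family: for s, γ, t ↦ Φ(γ t, s * ρ t)
  have hcontF : ∀ (s : unitInterval → unitInterval) (hs : Continuous s),
      Continuous fun z : (unitInterval × Path q₀ q₀) × unitInterval =>
        Φ (z.1.2 z.2, s z.1.1 * ρ z.2) := by
    intro s hs
    apply Φ.continuous.comp
    apply Continuous.prodMk
    · exact (continuous_fst.snd.eval continuous_snd)
    · have : Continuous fun z : (unitInterval × Path q₀ q₀) × unitInterval =>
          ((s z.1.1 : ℝ) * (ρ z.2 : ℝ)) :=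
        ((hs.comp continuous_fst.fst).subtype_val).mul
          ((ρ.continuous.comp continuous_snd).subtype_val)
      exact continuous_induced_rng.mpr this
  -- the path for given s and γ
  have key : ∀ (s : unitInterval) (γ : Path q₀ q₀) (t : unitInterval),
      t = 0 ∨ t = 1 → Φ (γ t, s * ρ t) = p₀ := by
    rintro s γ t (rfl | rfl)
    · simp only [γ.source, hρ0, mul_zero]
      exact hΦ0 q₀
    · simp only [γ.target, hρ1, mul_zero]
      exact hΦ0 q₀
  let P : unitInterval → Path q₀ q₀ → Path p₀ p₀ := fun s γ =>
    { toFun := fun t => Φ (γ t, s * ρ t)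
      continuous_toFun := by
        refine Φ.continuous.comp (Continuous.prodMk (γ.continuous) ?_)
        exact continuous_induced_rng.mpr
          (continuous_const.mul (ρ.continuous.subtype_val))
      source' := key s γ 0 (Or.inl rfl)
      target' := key s γ 1 (Or.inr rfl) }
  have hPcont : Continuous fun z : unitInterval × Path q₀ q₀ => P z.1 z.2 := by
    rw [← Path.continuous_uncurry_iff]
    exact hcontF id continuous_id
  let ψ : C(Path q₀ q₀, Path p₀ p₀) :=
    ⟨fun γ => P 1 γ, hPcont.comp (continuous_const.prodMk continuous_id)⟩
  let incl : C(Path q₀ q₀, Path p₀ p₀) :=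
    ⟨fun γ => P 0 γ, hPcont.comp (continuous_const.prodMk continuous_id)⟩
  refine ⟨ψ, incl, ?_, ?_, ?_, ?_⟩
  · intro γ t
    show Φ (γ t, 1 * ρ t) = Φ (γ t, ρ t)
    rw [one_mul]
  · intro γ t ht0 ht1
    exact hΦ (γ t) (1 * ρ t) (by rw [one_mul]; exact hρ t ht0 ht1)
  · intro γ t
    show Φ (γ t, 0 * ρ t) = (γ t : M)
    rw [zero_mul]
    exact hΦ0 (γ t)
  · refine ⟨{ toFun := fun z => P (unitInterval.symm z.1) z.2
              continuous_toFun :=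
                hPcont.comp ((unitInterval.continuous_symm.comp continuous_fst).prodMk
                  continuous_snd)
              map_zero_left := fun γ => by
                show P (unitInterval.symm 0) γ = ψ γ
                rw [unitInterval.symm_zero]; rfl
              map_one_left := fun γ => by
                show P (unitInterval.symm 1) γ = incl γ
                rw [unitInterval.symm_one]; rfl }⟩
end

section
/- Let n ≥ 2 and let Tⁿ = (ℝ/ℤ)ⁿ be the n-dimensional torus with basepoint p₀ = 0. Then for every continuous loop γ : [0,1] → Tⁿ with γ(0) = γ(1) = p₀ there exists a continuous loop σ : [0,1] → Tⁿ with σ(0) = σ(1) = p₀ which is homotopic to γ relative to the endpoints and satisfies σ(t) ≠ p₀ for every t ∈ (0,1). -/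
open Set

noncomputable def stmt13Ell : AddCircle (1:ℝ) → ℝ :=
  fun z => ((AddCircle.equivIco 1 (-(1/2)) z : Set.Ico (-(1/2):ℝ) (-(1/2)+1)) : ℝ)

lemma stmt13Ell_coe (z : AddCircle (1:ℝ)) : ((stmt13Ell z : ℝ) : AddCircle (1:ℝ)) = z :=
  (AddCircle.equivIco 1 (-(1/2))).symm_apply_apply z

lemma stmt13Ell_mem (z : AddCircle (1:ℝ)) :
    stmt13Ell z ∈ Set.Ico (-(1/2):ℝ) (1/2) := by
  have := (AddCircle.equivIco 1 (-(1/2)) z).2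
  norm_num at this ⊢
  exact this

lemma stmt13Ell_zero : stmt13Ell 0 = 0 := by
  have h := stmt13Ell_coe 0
  rw [AddCircle.coe_eq_zero_iff] at h
  obtain ⟨m, hm⟩ := h
  have hmem := stmt13Ell_mem 0
  rw [← hm] at hmem ⊢
  simp only [zsmul_eq_mul, mul_one] at hmem ⊢
  obtain ⟨h1, h2⟩ := hmem
  have hm1 : (m:ℝ) < 1 := lt_of_lt_of_le h2 (by norm_num)
  have hm2 : (-1:ℝ) < (m:ℝ) := lt_of_lt_of_le (by norm_num) h1
  have hi1 : m < 1 := by exact_mod_cast hm1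
  have hi2 : -1 < m := by exact_mod_cast hm2
  have : m = 0 := by omega
  simp [this]

lemma stmt13Ell_continuousAt {z : AddCircle (1:ℝ)} (h : ‖z‖ < 1/2) :
    ContinuousAt stmt13Ell z := by
  have hz : z ≠ ((-(1/2) : ℝ) : AddCircle (1:ℝ)) := by
    intro hzz
    rw [hzz] at h
    have h1 : ((-(1/2) : ℝ) : AddCircle (1:ℝ)) = -(((1/2 : ℝ)) : AddCircle (1:ℝ)) :=
      QuotientAddGroup.mk_neg _ _
    rw [h1, norm_neg] at h
    have h2 := AddCircle.norm_half_period_eq (1:ℝ)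
    norm_num [h2] at h
  exact continuousAt_subtype_val.comp (AddCircle.continuousAt_equivIco 1 (-(1/2)) hz)

lemma stmt13_min_sub {a b t : ℝ} (hab : a ≤ b) : |min t b - min t a| ≤ b - a := by
  rcases le_total t a with h | h
  · rw [min_eq_left h, min_eq_left (h.trans hab)]
    simpa using sub_nonneg.mpr hab
  · rw [min_eq_right h]
    rcases le_total t b with h' | h'
    · rw [min_eq_left h', abs_of_nonneg (sub_nonneg.mpr h)]
      linarith
    · rw [min_eq_right h', abs_of_nonneg (sub_nonneg.mpr hab)]

lemma stmt13_lift (η : ℝ → AddCircle (1:ℝ)) (hc : Continuous η)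
    (δ : ℝ) (hδ : 0 < δ) (hu : ∀ s t : ℝ, |s - t| < δ → ‖η s - η t‖ < 1/2) :
    ∃ g : ℝ → ℝ, Continuous g ∧ g 0 = 0 ∧
      ∀ t : ℝ, ((g t : ℝ) : AddCircle (1:ℝ)) = η (min t 1) - η (min t 0) := by
  obtain ⟨N, hN⟩ := exists_nat_gt (1/δ)
  have hN0 : 0 < (N:ℝ) := lt_trans (by positivity) hN
  have hNδ : 1/(N:ℝ) < δ := by
    rw [div_lt_iff₀ hN0]
    rw [div_lt_iff₀ hδ] at hN
    linarith
  refine ⟨fun t => ∑ j ∈ Finset.range N,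
      stmt13Ell (η (min t (((j:ℝ)+1)/N)) - η (min t ((j:ℝ)/N))), ?_, ?_, ?_⟩
  · apply continuous_finset_sum
    intro j _
    rw [continuous_iff_continuousAt]
    intro t
    have hinner : Continuous fun t : ℝ =>
        η (min t (((j:ℝ)+1)/N)) - η (min t ((j:ℝ)/N)) :=
      (hc.comp (continuous_id.min continuous_const)).sub
        (hc.comp (continuous_id.min continuous_const))
    apply ContinuousAt.comp _ hinner.continuousAt
    apply stmt13Ell_continuousAt
    apply hu
    have h1 : (j:ℝ)/N ≤ ((j:ℝ)+1)/N := by gcongr; linarith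
    have heq : ((j:ℝ)+1)/N - (j:ℝ)/N = 1/N := by ring
    refine lt_of_le_of_lt (stmt13_min_sub h1) ?_
    rw [heq]
    exact hNδ
  · apply Finset.sum_eq_zero
    intro j _
    have h1 : min (0:ℝ) (((j:ℝ)+1)/N) = 0 := min_eq_left (by positivity)
    have h2 : min (0:ℝ) ((j:ℝ)/N) = 0 := min_eq_left (by positivity)
    rw [h1, h2, sub_self, stmt13Ell_zero]
  · intro t
    have hmap : ((∑ j ∈ Finset.range N,
        stmt13Ell (η (min t (((j:ℝ)+1)/N)) - η (min t ((j:ℝ)/N))) : ℝ) : AddCircle (1:ℝ))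
        = ∑ j ∈ Finset.range N,
          ((stmt13Ell (η (min t (((j:ℝ)+1)/N)) - η (min t ((j:ℝ)/N))) : ℝ) : AddCircle (1:ℝ)) :=
      map_sum (QuotientAddGroup.mk' _) _ _
    rw [hmap]
    simp only [stmt13Ell_coe]
    have htel := Finset.sum_range_sub (f := fun j : ℕ => η (min t ((j:ℝ)/N))) N
    push_cast at htel
    rw [htel, div_self (ne_of_gt hN0), zero_div]

noncomputable def stmt13F {n : ℕ} (k : Fin n → ℝ) (t : ℝ) : Fin n → ℝ := fun i =>
  if (i:ℕ) = 0 then (k i + 1/2) * max 0 (min (4*t-1) 1) - (1/2) * max 0 (min (4*t-3) 1)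
  else if (i:ℕ) = 1 then (1/2) * min (4*t) 1 + (k i - 1/2) * max 0 (min (4*t-2) 1)
  else k i * max 0 (min (4*t-1) 1)

lemma stmt13F_cont {n : ℕ} (k : Fin n → ℝ) : Continuous (stmt13F k) := by
  apply continuous_pi
  intro i
  rcases eq_or_ne (i:ℕ) 0 with h | h
  · simp only [stmt13F, h, reduceIte]
    fun_prop
  rcases eq_or_ne (i:ℕ) 1 with h' | h'
  · simp only [stmt13F, h, h', reduceIte]
    norm_num
    fun_prop
  · simp only [stmt13F, h, h', reduceIte]
    fun_prop

lemma stmt13F_zero {n : ℕ} (k : Fin n → ℝ) : stmt13F k 0 = 0 := by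
  funext i
  have e1 : max (0:ℝ) (min (4*(0:ℝ)-1) 1) = 0 := by norm_num
  have e2 : max (0:ℝ) (min (4*(0:ℝ)-3) 1) = 0 := by norm_num
  have e3 : max (0:ℝ) (min (4*(0:ℝ)-2) 1) = 0 := by norm_num
  have e4 : min (4*(0:ℝ)) 1 = 0 := by norm_num
  simp only [stmt13F, e1, e2, e3, e4]
  split_ifs <;> simp

lemma stmt13F_one {n : ℕ} (k : Fin n → ℝ) : stmt13F k 1 = k := by
  funext i
  have e1 : max (0:ℝ) (min (4*(1:ℝ)-1) 1) = 1 := by norm_num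
  have e2 : max (0:ℝ) (min (4*(1:ℝ)-3) 1) = 1 := by norm_num
  have e3 : max (0:ℝ) (min (4*(1:ℝ)-2) 1) = 1 := by norm_num
  have e4 : min (4*(1:ℝ)) 1 = 1 := by norm_num
  simp only [stmt13F, e1, e2, e3, e4]
  split_ifs <;> ring

lemma stmt13F_guard_lo {n : ℕ} (k : Fin n → ℝ) {t : ℝ} (h0 : 0 < t) (h1 : t ≤ 1/2)
    (i : Fin n) (hi : (i:ℕ) = 1) :
    0 < stmt13F k t i ∧ stmt13F k t i ≤ 1/2 := by
  have hne : (i:ℕ) ≠ 0 := by omega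
  have e3 : max (0:ℝ) (min (4*t-2) 1) = 0 := by
    rw [min_eq_left (by linarith), max_eq_left (by linarith)]
  have hm1 : 0 < min (4*t) 1 := lt_min (by linarith) one_pos
  have hm2 : min (4*t) 1 ≤ 1 := min_le_right _ _
  simp only [stmt13F, hne, hi, reduceIte, e3, mul_zero, add_zero]
  rw [if_neg one_ne_zero]
  constructor <;> linarith

lemma stmt13F_guard_hi {n : ℕ} (k : Fin n → ℝ) {t : ℝ} (h0 : 1/2 ≤ t) (h1 : t < 1)
    (i : Fin n) (hi : (i:ℕ) = 0) :
    k i < stmt13F k t i ∧ stmt13F k t i ≤ k i + 1/2 := by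
  have e1 : max (0:ℝ) (min (4*t-1) 1) = 1 := by
    rw [min_eq_right (by linarith), max_eq_right zero_le_one]
  have hs1 : max (0:ℝ) (min (4*t-3) 1) < 1 := by
    apply max_lt one_pos
    exact lt_of_le_of_lt (min_le_left _ _) (by linarith)
  have hs0 : 0 ≤ max (0:ℝ) (min (4*t-3) 1) := le_max_left _ _
  simp only [stmt13F, hi, reduceIte, e1]
  constructor <;> linarith

lemma stmt13_cast_homotopic {X : Type*} [TopologicalSpace X] {x y x' y' : X}
    {p q : Path x y} (h : p.Homotopic q) (hx : x' = x) (hy : y' = y) :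
    (p.cast hx hy).Homotopic (q.cast hx hy) := by
  subst hx; subst hy
  have hp : p.cast rfl rfl = p := Path.ext rfl
  have hq : q.cast rfl rfl = q := Path.ext rfl
  rwa [hp, hq]

/-- On the `n`-torus `Tⁿ = (ℝ/ℤ)ⁿ` with `n ≥ 2` and basepoint `0`,
every based loop `γ` at `0` is homotopic relative to the endpoints (i.e. path-homotopic)
to a based loop `σ` at `0` with `σ(t) ≠ 0` for all `t ∈ (0,1)`. -/
theorem stmt13 {n : ℕ} (hn : 2 ≤ n)
    (γ : Path (0 : Fin n → AddCircle (1 : ℝ)) 0) :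
    ∃ σ : Path (0 : Fin n → AddCircle (1 : ℝ)) 0,
      σ.Homotopic γ ∧
      ∀ t : unitInterval, 0 < (t : ℝ) → (t : ℝ) < 1 → σ t ≠ 0 := by
  classical
  have key : ∀ i : Fin n, ∃ g : ℝ → ℝ, Continuous g ∧ g 0 = 0 ∧
      ∀ t : ℝ, ((g t : ℝ) : AddCircle (1:ℝ)) = γ.extend (min t 1) i - γ.extend (min t 0) i := by
    intro i
    have hci : Continuous fun s : ℝ => γ.extend s i :=
      (continuous_apply i).comp γ.continuous_extend
    have huc : UniformContinuous fun t : unitInterval => γ t i :=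
      CompactSpace.uniformContinuous_of_continuous ((continuous_apply i).comp γ.continuous)
    rw [Metric.uniformContinuous_iff] at huc
    obtain ⟨δ, hδ, hd⟩ := huc (1/2) (by norm_num)
    refine stmt13_lift _ hci δ hδ ?_
    intro s t hst
    have hle : dist (Set.projIcc (0:ℝ) 1 zero_le_one s) (Set.projIcc (0:ℝ) 1 zero_le_one t)
        ≤ dist s t := by
      simpa using (LipschitzWith.projIcc (a := (0:ℝ)) (b := 1) zero_le_one).dist_le_mul s t
    have hd2 := hd (lt_of_le_of_lt hle (by rwa [Real.dist_eq]))
    rw [dist_eq_norm] at hd2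
    exact hd2
  choose g hgc hg0 hgt using key
  set k : Fin n → ℝ := fun i => g i 1 with hkdef
  have hcoek : ∀ i, ((k i : ℝ) : AddCircle (1:ℝ)) = 0 := by
    intro i
    have h1 := hgt i 1
    rw [min_self, min_eq_right zero_le_one, Path.extend_one, Path.extend_zero] at h1
    simpa using h1
  have hki : ∀ i, ∃ m : ℤ, (m:ℝ) = k i := by
    intro i
    obtain ⟨m, hm⟩ := (AddCircle.coe_eq_zero_iff _).mp (hcoek i)
    exact ⟨m, by simpa [zsmul_eq_mul] using hm⟩
  have hqc : Continuous fun (x : Fin n → ℝ) (i : Fin n) => ((x i : ℝ) : AddCircle (1:ℝ)) :=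
    continuous_pi fun i => (AddCircle.continuous_mk' 1).comp (continuous_apply i)
  set qc : C(Fin n → ℝ, Fin n → AddCircle (1:ℝ)) :=
    ⟨fun x i => ((x i : ℝ) : AddCircle (1:ℝ)), hqc⟩ with hqcdef
  set F : Path (0 : Fin n → ℝ) k :=
    { toContinuousMap := ⟨fun t => stmt13F k t.1, (stmt13F_cont k).comp continuous_subtype_val⟩
      source' := stmt13F_zero k
      target' := stmt13F_one k } with hFdef
  set G : Path (0 : Fin n → ℝ) k :=
    { toContinuousMap := ⟨fun t => fun i => g i t.1,
        continuous_pi fun i => (hgc i).comp continuous_subtype_val⟩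
      source' := by funext i; exact hg0 i
      target' := rfl } with hGdef
  have h0 : (0 : Fin n → AddCircle (1:ℝ)) = qc 0 := by
    funext i
    simp [hqcdef]
  have h1 : (0 : Fin n → AddCircle (1:ℝ)) = qc k := by
    funext i
    exact (hcoek i).symm
  refine ⟨(F.map qc.continuous).cast h0 h1, ?_, ?_⟩
  · have hFG : F.Homotopic G := SimplyConnectedSpace.paths_homotopic F G
    have h2 := hFG.map qc
    have h3 := stmt13_cast_homotopic h2 h0 h1
    have hGγ : (G.map qc.continuous).cast h0 h1 = γ := by
      apply Path.ext
      funext t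
      have hlhs : ((G.map qc.continuous).cast h0 h1) t = qc (G t) := rfl
      rw [hlhs]
      funext i
      show ((g i t.1 : ℝ) : AddCircle (1:ℝ)) = γ t i
      rw [hgt i t.1, min_eq_left t.2.2, min_eq_right t.2.1, Path.extend_zero,
        Path.extend_extends' γ t]
      simp
    rwa [hGγ] at h3
  · intro t ht0 ht1 hcontra
    have hσt : ∀ i, (((F.map qc.continuous).cast h0 h1) t) i
        = ((stmt13F k t.1 i : ℝ) : AddCircle (1:ℝ)) := fun i => rfl
    rcases le_total (t:ℝ) (1/2) with hle | hle
    · have hguard := stmt13F_guard_lo k ht0 hle (⟨1, by omega⟩ : Fin n) rfl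
      have hz := congrFun hcontra (⟨1, by omega⟩ : Fin n)
      rw [hσt] at hz
      simp only [Pi.zero_apply] at hz
      rw [AddCircle.coe_eq_zero_iff] at hz
      obtain ⟨z, hzz⟩ := hz
      simp only [zsmul_eq_mul, mul_one] at hzz
      rw [← hzz] at hguard
      have hz1 : (0:ℝ) < (z:ℝ) := hguard.1
      have hz2 : (z:ℝ) ≤ 1/2 := hguard.2
      have hz3 : (0:ℤ) < z := by exact_mod_cast hz1
      have hz4 : (1:ℝ) ≤ (z:ℝ) := by exact_mod_cast hz3
      linarith
    · have hguard := stmt13F_guard_hi k hle ht1 (⟨0, by omega⟩ : Fin n) rfl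
      obtain ⟨m, hm⟩ := hki (⟨0, by omega⟩ : Fin n)
      have hz := congrFun hcontra (⟨0, by omega⟩ : Fin n)
      rw [hσt] at hz
      simp only [Pi.zero_apply] at hz
      rw [AddCircle.coe_eq_zero_iff] at hz
      obtain ⟨z, hzz⟩ := hz
      simp only [zsmul_eq_mul, mul_one] at hzz
      rw [← hzz, ← hm] at hguard
      have hz1 : (m:ℝ) < (z:ℝ) := hguard.1
      have hz2 : (z:ℝ) ≤ (m:ℝ) + 1/2 := hguard.2
      have hz3 : m < z := by exact_mod_cast hz1
      have hz4 : ((m:ℝ) + 1 : ℝ) ≤ (z:ℝ) := by exact_mod_cast (by omega : m + 1 ≤ z)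
      linarith
end
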